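/- Let F be a dyadic local field with e = ord(2) and let M ≅ ≺a₁,…,a_m≻ be an integral 𝒪_F-lattice relative to a good BONG with R_i = ord(a_i). If R_j = 0 for some odd index j, then R_i = 0 for all odd i ≤ j, and R_i is even for all 1 ≤ i ≤ j. -/

import Mathlib

noncomputable section
open scoped Classical

/-- A normalized discrete valuation on a field, written additively with values in `ℤ ∪ {∞}`. -/
structure NormDiscValuation (F : Type*) [Field F] : Type _ where
  v : F → WithTop ℤ
  v_zero : v 0 = ⊤
  v_ne_top : ∀ x : F, x ≠ 0 → v x ≠ ⊤
  v_mul : ∀ x y : F, v (x * y) = v x + v y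
  v_add : ∀ x y : F, min (v x) (v y) ≤ v (x + y)
  v_surj : ∀ k : ℤ, ∃ x : F, v x = (k : WithTop ℤ)

variable {F : Type*}

/-- The order of the relative quadratic defect: `d(c) = ord (c⁻¹ 𝔡(c))`, where
`𝔡(c) = ⋂_{x ∈ F} (c - x²) 𝒪_F`; the order of this intersection of principal fractional
ideals is the supremum of the orders `ord ((c - x²)/c)`. -/
def relDefect [Field F] (V : NormDiscValuation F) (c : F) : WithTop ℤ :=
  ⨆ x : F, V.v ((c - x ^ 2) / c)

/-- `(a, b)_𝔭 = 1` for the Hilbert symbol: `z² = a x² + b y²` has a nontrivial solution. -/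
def HilbertOne [Field F] (a b : F) : Prop := ∃ x y : F, a * x ^ 2 + b * y ^ 2 = 1

/-!
Along a good BONG the odd-indexed orders increase, `R_i ≤ R_{i+2}`, so `0 ≤ R_1 ≤ R_i ≤ R_j = 0`
for odd `i ≤ j`. An even `i < j` then sits between two zeros, `R_{i-1} = R_{i+1} = 0`. If `R_i`
were odd, `-a_{i-1} a_i` and `-a_i a_{i+1}` would have odd order, hence relative quadratic defect
`0`, and the BONG condition `R_{k+1} - R_k + d(-a_k a_{k+1}) ≥ 0` would give both `R_i ≥ 0` and
`-R_i ≥ 0`, i.e. `R_i = 0`, which is not odd.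
-/

namespace NormDiscValuation

variable [Field F] (V : NormDiscValuation F)

theorem v_one : V.v 1 = 0 := by
  have h := V.v_mul 1 1
  rw [one_mul] at h
  lift V.v 1 to ℤ using V.v_ne_top 1 one_ne_zero with k
  have : k = k + k := mod_cast h
  exact_mod_cast (show k = 0 by omega)

theorem v_neg (x : F) : V.v (-x) = V.v x := by
  have h := V.v_mul (-1) (-1)
  rw [neg_mul_neg, one_mul, v_one] at h
  lift V.v (-1) to ℤ using V.v_ne_top _ (neg_ne_zero.mpr one_ne_zero) with k hk
  have hk0 : k = 0 := by
    have : (0 : ℤ) = k + k := mod_cast h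
    omega
  rw [← neg_one_mul, V.v_mul, ← hk, hk0, WithTop.coe_zero, zero_add]

theorem v_add_eq_left_of_lt {x y : F} (h : V.v x < V.v y) : V.v (x + y) = V.v x := by
  refine le_antisymm ?_ (le_trans (le_min le_rfl h.le) (V.v_add x y))
  by_contra! hlt
  have h2 := V.v_add (x + y) (-y)
  rw [v_neg, add_neg_cancel_right] at h2
  exact h2.not_gt (lt_min hlt h)

theorem v_sub_le_left_of_ne {x y : F} (h : V.v x ≠ V.v y) : V.v (x - y) ≤ V.v x := by
  rcases h.lt_or_gt with h | h
  · rw [sub_eq_add_neg, V.v_add_eq_left_of_lt (by rwa [v_neg])]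
  · rw [sub_eq_neg_add, V.v_add_eq_left_of_lt (by rwa [v_neg]), v_neg]
    exact h.le

theorem v_sq_ne_of_odd (x : F) {k : ℤ} (hk : Odd k) : V.v (x ^ 2) ≠ k := by
  rw [pow_two, V.v_mul]
  rcases eq_or_ne (V.v x) ⊤ with h | h
  · simp [h]
  · lift V.v x to ℤ using h with n
    intro hcon
    have : n + n = k := mod_cast hcon
    obtain ⟨t, ht⟩ := hk
    omega

theorem relDefect_eq_zero_of_odd {c : F} {k : ℤ} (hk : Odd k) (hc : V.v c = k) :
    relDefect V c = 0 := by
  have hc0 : c ≠ 0 := by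
    rintro rfl
    rw [V.v_zero] at hc
    exact WithTop.top_ne_coe hc
  have hfin : V.v c ≠ ⊤ := hc ▸ WithTop.coe_ne_top
  have hle : ∀ x : F, V.v ((c - x ^ 2) / c) ≤ 0 := fun x => by
    have hsub : V.v (c - x ^ 2) ≤ V.v c :=
      V.v_sub_le_left_of_ne (hc ▸ (V.v_sq_ne_of_odd x hk).symm)
    rw [← WithTop.add_le_add_iff_right hfin, ← V.v_mul, div_mul_cancel₀ _ hc0, zero_add]
    exact hsub
  have hzero : V.v ((c - (0 : F) ^ 2) / c) = 0 := by
    rw [zero_pow two_ne_zero, sub_zero, div_self hc0, v_one]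
  exact le_antisymm (ciSup_le hle)
    (hzero ▸ le_ciSup (f := fun x : F => V.v ((c - x ^ 2) / c)) (OrderTop.bddAbove _) 0)

theorem sub_nonneg_of_odd_sub {c : F} {r s : ℤ} (hc : V.v c = (r + s : ℤ)) (hodd : Odd (s - r))
    (h : 0 ≤ ((s - r : ℤ) : WithTop ℤ) + relDefect V c) : 0 ≤ s - r := by
  have hsum : Odd (r + s) := by
    obtain ⟨t, ht⟩ := hodd
    exact ⟨r + t, by omega⟩
  rw [V.relDefect_eq_zero_of_odd hsum hc, add_zero] at h
  exact_mod_cast h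

end NormDiscValuation

section IntegerSequences

variable {R : ℕ → ℤ} {m : ℕ}

theorem le_add_two_mul_of_le_add_two (hgood : ∀ i, 1 ≤ i → i + 2 ≤ m → R i ≤ R (i + 2))
    {i : ℕ} (hi : 1 ≤ i) (d : ℕ) (hd : i + 2 * d ≤ m) : R i ≤ R (i + 2 * d) := by
  induction d with
  | zero => simp
  | succ d ih =>
    have := hgood (i + 2 * d) (by omega) (by omega)
    rw [show i + 2 * (d + 1) = i + 2 * d + 2 by ring]
    exact (ih (by omega)).trans this

theorem eq_zero_of_odd_of_le (hgood : ∀ i, 1 ≤ i → i + 2 ≤ m → R i ≤ R (i + 2))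
    (hR₁ : 0 ≤ R 1) {j : ℕ} (hjodd : Odd j) (hjm : j ≤ m) (hRj : R j = 0)
    {i : ℕ} (hi : Odd i) (hij : i ≤ j) : R i = 0 := by
  obtain ⟨k, rfl⟩ := hi
  obtain ⟨l, rfl⟩ := hjodd
  have h₁ := le_add_two_mul_of_le_add_two hgood le_rfl k (by omega)
  have h₂ := le_add_two_mul_of_le_add_two hgood (i := 2 * k + 1) (by omega) (l - k) (by omega)
  rw [show 1 + 2 * k = 2 * k + 1 by ring] at h₁
  rw [show 2 * k + 1 + 2 * (l - k) = 2 * l + 1 by omega] at h₂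
  omega

theorem even_of_eq_zero_of_eq_zero (hjump : ∀ i, 1 ≤ i → i + 1 ≤ m →
      Odd (R (i + 1) - R i) → 0 ≤ R (i + 1) - R i)
    {p : ℕ} (hp : 1 ≤ p) (hpm : p + 2 ≤ m) (hp₀ : R p = 0) (hp₂ : R (p + 2) = 0) :
    Even (R (p + 1)) := by
  by_contra hne
  obtain ⟨t, ht⟩ := Int.not_even_iff_odd.mp hne
  have h₁ := hjump p hp (by omega) ⟨t, by omega⟩
  have h₂ := hjump (p + 1) (by omega) (by omega) ⟨-t - 1, by rw [hp₂]; omega⟩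
  rw [hp₂] at h₂
  omega

end IntegerSequences

theorem bong_integral_R_zero_prop_general [Field F]
    (V : NormDiscValuation F)
    (m : ℕ) (a : ℕ → F) (R : ℕ → ℤ)
    (hval : ∀ i, 1 ≤ i → i ≤ m → V.v (a i) = (R i : WithTop ℤ))
    (hgood : ∀ i, 1 ≤ i → i + 2 ≤ m → R i ≤ R (i + 2))
    (hbong₁ : ∀ i, 1 ≤ i → i + 1 ≤ m →
      (0 : WithTop ℤ) ≤ ((R (i + 1) - R i : ℤ) : WithTop ℤ)
        + relDefect V (-(a i * a (i + 1))))
    (hint : 0 ≤ R 1) (j : ℕ) (hjodd : Odd j) (hjm : j ≤ m) (hRj : R j = 0) :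
    (∀ i, Odd i → i ≤ j → R i = 0) ∧ (∀ i, 1 ≤ i → i ≤ j → Even (R i)) := by
  have hjump : ∀ i, 1 ≤ i → i + 1 ≤ m → Odd (R (i + 1) - R i) → 0 ≤ R (i + 1) - R i :=
    fun i hi hi' hodd => V.sub_nonneg_of_odd_sub
      (by rw [V.v_neg, V.v_mul, hval i hi (by omega), hval (i + 1) (by omega) hi']; rfl)
      hodd (hbong₁ i hi hi')
  have hodd : ∀ i, Odd i → i ≤ j → R i = 0 := fun _ =>
    eq_zero_of_odd_of_le hgood hint hjodd hjm hRj
  refine ⟨hodd, fun i hi hij => ?_⟩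
  rcases Nat.even_or_odd i with ⟨k, rfl⟩ | hio
  · obtain ⟨l, rfl⟩ := hjodd
    have := even_of_eq_zero_of_eq_zero hjump (p := 2 * k - 1) (by omega) (by omega)
      (hodd _ ⟨k - 1, by omega⟩ (by omega)) (hodd _ ⟨k, by omega⟩ (by omega))
    rwa [show 2 * k - 1 + 1 = k + k by omega] at this
  · rw [hodd i hio hij]
    exact Even.zero

/-- for an integral lattice with good BONG, if `R_j = 0` for some odd
`j ≤ m`, then `R_i = 0` for all odd `i ≤ j` and `R_i` is even for all `1 ≤ i ≤ j`. -/
theorem bong_integral_R_zero_prop [Field F] [Algebra ℚ_[2] F] [FiniteDimensional ℚ_[2] F]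
    (V : NormDiscValuation F) (e : ℤ) (he : V.v 2 = (e : WithTop ℤ))
    (m : ℕ) (a : ℕ → F) (R : ℕ → ℤ)
    (hne : ∀ i, 1 ≤ i → i ≤ m → a i ≠ 0)
    (hval : ∀ i, 1 ≤ i → i ≤ m → V.v (a i) = (R i : WithTop ℤ))
    (hgood : ∀ i, 1 ≤ i → i + 2 ≤ m → R i ≤ R (i + 2))
    (hbong₁ : ∀ i, 1 ≤ i → i + 1 ≤ m →
      (0 : WithTop ℤ) ≤ ((R (i + 1) - R i : ℤ) : WithTop ℤ)
        + relDefect V (-(a i * a (i + 1))))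
    (hbong₂ : ∀ i, 1 ≤ i → i + 1 ≤ m → -(2 * e) ≤ R (i + 1) - R i)
    (hint : 0 ≤ R 1) (j : ℕ) (hjodd : Odd j) (hjm : j ≤ m) (hRj : R j = 0) :
    (∀ i, Odd i → i ≤ j → R i = 0) ∧ (∀ i, 1 ≤ i → i ≤ j → Even (R i)) :=
  bong_integral_R_zero_prop_general V m a R hval hgood hbong₁ hint j hjodd hjm hRj
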